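/- arXiv:2601.02279 — 6 statements merged into one kernel-verified Lean document; each statement's English description precedes it below -/
import Mathlib

section
/- Let (U,p) be a partial metric space with at least two points. Suppose that for every pair of points x,y ∈ U and every pair of radii r,R > 0 with p(x,y) ≤ r + R there exists a point z ∈ U such that p(x,z) ≤ r and p(z,y) ≤ R. Then p(x,x) = 0 for every x ∈ U, i.e., p is a metric on U. -/
/-- A partial metric on `U`: nonnegative, (P1) `x = y ↔ p(x,x) = p(y,y) = p(x,y)`,
(P2) `p(x,x) ≤ p(x,y)`, (P3) symmetry, (P4) modified triangle inequality. -/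
def IsPartialMetric {U : Type*} (p : U → U → ℝ) : Prop :=
  (∀ x y, 0 ≤ p x y) ∧
  (∀ x y, x = y ↔ p x x = p x y ∧ p y y = p x y) ∧
  (∀ x y, p x x ≤ p x y) ∧
  (∀ x y, p x y = p y x) ∧
  (∀ x y z, p x y ≤ p x z + p z y - p z z)

/-- If `(U,p)` is a partial metric space with at least two points such that for any
`x, y ∈ U` and radii `r, R > 0` with `p(x,y) ≤ r + R` there is `z` with `p(x,z) ≤ r`
and `p(z,y) ≤ R`, then `p` is a metric, i.e. all self-distances vanish. -/
theorem partial_hyperconvexity_trivial {U : Type*} (p : U → U → ℝ)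
    (hp : IsPartialMetric p) (htwo : ∃ x y : U, x ≠ y)
    (h : ∀ x y : U, ∀ r R : ℝ, 0 < r → 0 < R → p x y ≤ r + R →
      ∃ z : U, p x z ≤ r ∧ p z y ≤ R) :
    ∀ x : U, p x x = 0 := by
  intro x
  obtain ⟨hnn, _, hP2, _, _⟩ := hp
  by_contra hne
  have hpos : 0 < p x x := lt_of_le_of_ne (hnn x x) (Ne.symm hne)
  obtain ⟨z, hz1, _⟩ := h x x (p x x / 2) (p x x / 2) (by linarith) (by linarith)
    (by linarith)
  have := hP2 x z
  linarith
end

section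
/- Let (U,p) be a bounded AP-hyperconvex partial metric space and let a be a point not in U. Then the set W := U ∪ {a} admits a partial metric q that agrees with p on U × U and such that (W,q) is AP-hyperconvex. Concretely, setting M := 1 + sup_{x,y∈U} p(x,y) and q(x,y) := p(x,y) for x,y ∈ U, q(x,y) := M whenever x = a or y = a, the function q is a partial metric on W extending p, and (W,q) is AP-hyperconvex. -/
def APHyperconvex {U : Type*} (p : U → U → ℝ) : Prop :=
  ∀ (I : Type) (c : I → U) (r : I → ℝ),
    (∀ i, 0 < r i) → (∀ i j, p (c i) (c j) ≤ r i + r j) →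
    ∃ x, ∀ i, p x (c i) ≤ p (c i) (c i) + r i

/-- The one-point extension `W = U ∪ {a}` is modelled by `Option U`, where the new
point `a` is `none`. The extended partial metric `q` takes the value
`M = 1 + sup_{x,y ∈ U} p(x,y)` whenever one of its arguments is the new point. -/
noncomputable def extendPMetric {U : Type*} (p : U → U → ℝ) :
    Option U → Option U → ℝ := fun x y =>
  match x, y with
  | some x, some y => p x y
  | _, _ => 1 + sSup (Set.range fun xy : U × U => p xy.1 xy.2)

/-- A bounded AP-hyperconvex partial metric space `(U,p)` extends, by adjoining one
new point at mutual distance `M = 1 + sup p`, to an AP-hyperconvex partial metric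
space `(W, q)` with `q` agreeing with `p` on `U × U`. -/
theorem hyperconvex_extension {U : Type*} [Nonempty U] (p : U → U → ℝ)
    (hp : IsPartialMetric p)
    (hbdd : BddAbove (Set.range fun xy : U × U => p xy.1 xy.2))
    (hap : APHyperconvex p) :
    IsPartialMetric (extendPMetric p) ∧
    (∀ x y : U, extendPMetric p (some x) (some y) = p x y) ∧
    APHyperconvex (extendPMetric p) := by
  obtain ⟨hnn, heq, hself, hsym, htri⟩ := hp
  set S := sSup (Set.range fun xy : U × U => p xy.1 xy.2) with hS
  have hle : ∀ x y : U, p x y ≤ S := fun x y => le_csSup hbdd ⟨(x, y), rfl⟩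
  have hlt : ∀ x y : U, p x y < 1 + S := fun x y =>
    lt_of_le_of_lt (hle x y) (by linarith)
  have hM0 : (0 : ℝ) ≤ 1 + S := by
    obtain ⟨u⟩ := ‹Nonempty U›
    linarith [hnn u u, hle u u]
  refine ⟨⟨?_, ?_, ?_, ?_, ?_⟩, fun x y => rfl, ?_⟩
  · rintro (_|x) (_|y)
    · exact hM0
    · exact hM0
    · exact hM0
    · exact hnn x y
  · rintro (_|x) (_|y)
    · simp [extendPMetric]
    · show _ ↔ (1 + S = 1 + S) ∧ p y y = 1 + S
      constructor
      · rintro ⟨⟩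
      · rintro ⟨-, h2⟩
        exact absurd h2 (ne_of_lt (hlt y y))
    · show _ ↔ p x x = 1 + S ∧ (1 + S = 1 + S)
      constructor
      · rintro ⟨⟩
      · rintro ⟨h1, -⟩
        exact absurd h1 (ne_of_lt (hlt x x))
    · show _ ↔ p x x = p x y ∧ p y y = p x y
      constructor
      · rintro h
        injection h with h
        subst h
        exact ⟨rfl, rfl⟩
      · rintro h
        exact congrArg some ((heq x y).2 h)
  · rintro (_|x) (_|y)
    · exact le_refl (1 + S)
    · exact le_refl (1 + S)
    · exact le_of_lt (hlt x x)
    · exact hself x y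
  · rintro (_|x) (_|y)
    · rfl
    · rfl
    · rfl
    · exact hsym x y
  · rintro (_|x) (_|y) (_|z)
    · show (1 + S : ℝ) ≤ (1 + S) + (1 + S) - (1 + S); linarith
    · show (1 + S : ℝ) ≤ (1 + S) + (1 + S) - p z z; linarith [hlt z z]
    · show (1 + S : ℝ) ≤ (1 + S) + (1 + S) - (1 + S); linarith
    · show (1 + S : ℝ) ≤ (1 + S) + p z y - p z z; linarith [hself z y]
    · show (1 + S : ℝ) ≤ (1 + S) + (1 + S) - (1 + S); linarith
    · show (1 + S : ℝ) ≤ p x z + (1 + S) - p z z; linarith [hself z x, hsym x z]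
    · show p x y ≤ (1 + S) + (1 + S) - (1 + S); linarith [hle x y]
    · exact htri x y z
  · intro I c r hr hcr
    let I' := {i : I // (c i).isSome}
    let c' : I' → U := fun i => (c i.1).get i.2
    have hc' : ∀ i : I', c i.1 = some (c' i) := fun i => (Option.some_get i.2).symm
    obtain ⟨x0, hx0⟩ := hap I' c' (fun i => r i.1) (fun i => hr i.1)
      (fun i j => by
        have h := hcr i.1 j.1
        rw [hc' i, hc' j] at h
        exact h)
    refine ⟨some x0, fun i => ?_⟩
    rcases h : c i with _ | u
    · show (1 + S : ℝ) ≤ (1 + S) + r i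
      linarith [hr i]
    · have hi : (c i).isSome := by rw [h]; rfl
      have hu : c' ⟨i, hi⟩ = u := by simp [c', h]
      have hx := hx0 ⟨i, hi⟩
      rw [hu] at hx
      show p x0 u ≤ p u u + r i
      exact hx
end

section
/- Let (U,p) be a bounded partial metric space and let a be a point not in U. Then the set W := U ∪ {a} admits a partial metric q that agrees with p on U × U and such that (W,q) is nodally hyperconvex. Concretely, setting M := 1 + sup_{x,y∈U} p(x,y) and q(x,y) := p(x,y) for x,y ∈ U, q(x,y) := M whenever x = a or y = a, the function q is a partial metric on W extending p, and (W,q) is nodally hyperconvex. -/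
def NodallyHyperconvex {U : Type*} (p : U → U → ℝ) : Prop :=
  ∀ (I : Type) (c : I → U) (r : I → ℝ),
    (∀ i, 0 < r i) → (∀ i j, p (c i) (c j) ≤ r i + r j) →
    ∃ x, ∀ i, p x (c i) ≤ p x x + r i

/-- A bounded partial metric space `(U,p)` extends, by adjoining one new point at
mutual distance `M = 1 + sup p`, to a nodally hyperconvex partial metric space
`(W, q)` with `q` agreeing with `p` on `U × U`. -/
theorem nodally_hyperconvex_extension {U : Type*} [Nonempty U] (p : U → U → ℝ)
    (hp : IsPartialMetric p)
    (hbdd : BddAbove (Set.range fun xy : U × U => p xy.1 xy.2)) :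
    IsPartialMetric (extendPMetric p) ∧
    (∀ x y : U, extendPMetric p (some x) (some y) = p x y) ∧
    NodallyHyperconvex (extendPMetric p) := by
  obtain ⟨hnn, heq, hss, hsym, htri⟩ := hp
  have hle : ∀ x y : U, p x y ≤ sSup (Set.range fun xy : U × U => p xy.1 xy.2) :=
    fun x y => le_csSup hbdd ⟨(x, y), rfl⟩
  have hlt : ∀ x y : U, p x y < 1 + sSup (Set.range fun xy : U × U => p xy.1 xy.2) :=
    fun x y => by linarith [hle x y]
  have hM0 : (0:ℝ) ≤ 1 + sSup (Set.range fun xy : U × U => p xy.1 xy.2) := by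
    obtain ⟨u⟩ := ‹Nonempty U›
    linarith [hle u u, hnn u u]
  refine ⟨⟨?_, ?_, ?_, ?_, ?_⟩, fun x y => rfl, ?_⟩
  · rintro (_ | x) (_ | y)
    · exact hM0
    · exact hM0
    · exact hM0
    · exact hnn x y
  · rintro (_ | x) (_ | y)
    · simp
    · constructor
      · rintro ⟨⟩
      · rintro ⟨-, h2⟩
        exact absurd h2 (ne_of_lt (hlt y y))
    · constructor
      · rintro ⟨⟩
      · rintro ⟨h1, -⟩
        exact absurd h1 (ne_of_lt (hlt x x))
    · rw [Option.some.injEq]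
      exact heq x y
  · rintro (_ | x) (_ | y)
    · exact le_refl _
    · exact le_refl _
    · exact (hlt x x).le
    · exact hss x y
  · rintro (_ | x) (_ | y)
    · rfl
    · rfl
    · rfl
    · exact hsym x y
  · rintro (_ | x) (_ | y) (_ | z)
    · show (1:ℝ) + _ ≤ (1 + _) + (1 + _) - (1 + _); linarith [hM0]
    · show (1:ℝ) + _ ≤ (1 + _) + (1 + _) - p z z; linarith [hle z z]
    · show (1:ℝ) + _ ≤ (1 + _) + (1 + _) - (1 + _); linarith [hM0]
    · show (1:ℝ) + _ ≤ (1 + _) + p z y - p z z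
      linarith [hss z y, hsym z y, hsym y z]
    · show (1:ℝ) + _ ≤ (1 + _) + (1 + _) - (1 + _); linarith [hM0]
    · show (1:ℝ) + _ ≤ p x z + (1 + _) - p z z
      linarith [hss z x, hsym x z]
    · show p x y ≤ (1 + _) + (1 + _) - (1 + _); linarith [hle x y]
    · exact htri x y z
  · intro I c r hr _
    refine ⟨none, fun i => ?_⟩
    cases c i <;> · show (1:ℝ) + _ ≤ (1 + _) + r i; linarith [hr i]
end

section
/- Let (U,p) be a partial metric space and define p^m(x,y) := 2p(x,y) − p(x,x) − p(y,y). If the metric space (U,p^m) is hyperconvex, then (U,p) is nodally hyperconvex. -/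
/-- Hyperconvexity for a metric `d` (radii are nonnegative). -/
def MetricHyperconvex {U : Type*} (d : U → U → ℝ) : Prop :=
  ∀ (I : Type) (c : I → U) (r : I → ℝ),
    (∀ i, 0 ≤ r i) → (∀ i j, d (c i) (c j) ≤ r i + r j) →
    ∃ x, ∀ i, d x (c i) ≤ r i

/-- If the associated metric space `(U, pᵐ)`, where
`pᵐ(x,y) = 2p(x,y) − p(x,x) − p(y,y)`, is hyperconvex, then `(U,p)` is
nodally hyperconvex. -/
theorem pm_hyperconvex_implies_nodally {U : Type*} (p : U → U → ℝ)
    (hp : IsPartialMetric p)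
    (h : MetricHyperconvex (fun x y => 2 * p x y - p x x - p y y)) :
    NodallyHyperconvex p := by
  obtain ⟨hnn, _, hsmall, _, _⟩ := hp
  intro I c r hr hball
  obtain ⟨x, hx⟩ := h I c (fun i => 2 * r i - p (c i) (c i))
    (fun i => by
      have := hball i i
      linarith)
    (fun i j => by
      have := hball i j
      simp only
      linarith)
  refine ⟨x, fun i => ?_⟩
  have h1 := hx i
  have h2 := hnn x x
  simp only at h1
  linarith
end

section
/- Let (U,p) be a partial metric space and define d_m(x,y) := max{p(x,y) − p(x,x), p(x,y) − p(y,y)}. If the metric space (U,d_m) is hyperconvex, then (U,p) is both AP-hyperconvex and nodally hyperconvex. -/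
/-- If the associated metric space `(U, d_m)`, where
`d_m(x,y) = max{p(x,y) − p(x,x), p(x,y) − p(y,y)}`, is hyperconvex, then `(U,p)`
is both AP-hyperconvex and nodally hyperconvex. -/
theorem dm_hyperconvex_implies_AP_and_nodally {U : Type*} (p : U → U → ℝ)
    (hp : IsPartialMetric p)
    (h : MetricHyperconvex (fun x y => max (p x y - p x x) (p x y - p y y))) :
    APHyperconvex p ∧ NodallyHyperconvex p := by
  obtain ⟨hnn, _, _, _, _⟩ := hp
  have key : ∀ (I : Type) (c : I → U) (r : I → ℝ),
      (∀ i, 0 < r i) → (∀ i j, p (c i) (c j) ≤ r i + r j) →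
      ∃ x, ∀ i, p x (c i) ≤ p x x + r i ∧ p x (c i) ≤ p (c i) (c i) + r i := by
    intro I c r hr hb
    obtain ⟨x, hx⟩ := h I c r (fun i => (hr i).le) (fun i j => by
      apply max_le <;> linarith [hb i j, hnn (c i) (c i), hnn (c j) (c j)])
    refine ⟨x, fun i => ⟨?_, ?_⟩⟩
    · have h1 := le_max_left (p x (c i) - p x x) (p x (c i) - p (c i) (c i))
      linarith [hx i]
    · have h2 := le_max_right (p x (c i) - p x x) (p x (c i) - p (c i) (c i))
      linarith [hx i]
  constructor
  · intro I c r hr hb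
    obtain ⟨x, hx⟩ := key I c r hr hb
    exact ⟨x, fun i => (hx i).2⟩
  · intro I c r hr hb
    obtain ⟨x, hx⟩ := key I c r hr hb
    exact ⟨x, fun i => (hx i).1⟩
end

section
/- Let U := {a,b} be a two-element set with the partial metric p(a,a) = p(b,b) = 2, p(a,b) = p(b,a) = 3, and let f : U → U be the swap map f(a) = b, f(b) = a. Then p is a partial metric on U, (U,p) is bounded, both AP-hyperconvex and nodally hyperconvex, f satisfies p(f(x),f(y)) = p(x,y) for all x,y ∈ U (so f is an isometry in the sense of Matthews, and in particular non-expansive), yet f has no fixed point. Hence a Baillon-type fixed point theorem fails for bounded AP- and nodally hyperconvex partial metric spaces. -/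
/-- The two-point space `U = {a,b}` with `p(a,a) = p(b,b) = 2`, `p(a,b) = 3` is a
bounded partial metric space which is both AP- and nodally hyperconvex, and the swap
map `f(a) = b`, `f(b) = a` is an isometry in the sense of Matthews (in particular
non-expansive), yet it has no fixed point. Hence a Baillon-type fixed point theorem
fails for bounded AP- and nodally hyperconvex partial metric spaces. -/
theorem no_baillon_fixed_point {U : Type*} (a b : U) (hab : a ≠ b)
    (hcov : ∀ x : U, x = a ∨ x = b) (p : U → U → ℝ)
    (haa : p a a = 2) (hbb : p b b = 2) (hab' : p a b = 3) (hba : p b a = 3)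
    (f : U → U) (hfa : f a = b) (hfb : f b = a) :
    IsPartialMetric p ∧
    BddAbove (Set.range fun xy : U × U => p xy.1 xy.2) ∧
    APHyperconvex p ∧ NodallyHyperconvex p ∧
    (∀ x y : U, p (f x) (f y) = p x y) ∧
    ¬ ∃ x : U, f x = x := by
  have hval : ∀ x y : U, p x y ≤ 3 := by
    intro x y
    rcases hcov x with hx | hx <;> rcases hcov y with hy | hy <;> subst hx <;> subst hy <;> linarith
  have hge : ∀ x y : U, 2 ≤ p x y := by
    intro x y
    rcases hcov x with hx | hx <;> rcases hcov y with hy | hy <;> subst hx <;> subst hy <;> linarith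
  have hdiag : ∀ x : U, p x x = 2 := by
    intro x; rcases hcov x with hx | hx <;> subst hx <;> assumption
  have hne : ∀ x y : U, x ≠ y → p x y = 3 := by
    intro x y hxy
    rcases hcov x with hx | hx <;> rcases hcov y with hy | hy <;> subst hx <;> subst hy <;>
      first | exact absurd rfl hxy | assumption
  refine ⟨⟨?_, ?_, ?_, ?_, ?_⟩, ?_, ?_, ?_, ?_, ?_⟩
  · intro x y; linarith [hge x y]
  · intro x y
    constructor
    · rintro rfl; exact ⟨rfl, rfl⟩
    · rintro ⟨h1, _⟩
      by_contra hxy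
      rw [hne x y hxy, hdiag x] at h1; norm_num at h1
  · intro x y; rw [hdiag x]; exact hge x y
  · intro x y
    rcases hcov x with hx | hx <;> rcases hcov y with hy | hy <;> subst hx <;> subst hy <;> linarith
  · intro x y z
    rw [hdiag z]
    by_cases hxy : x = y
    · subst hxy; rw [hdiag x]; linarith [hge x z, hge z x]
    · rw [hne x y hxy]
      by_cases hxz : x = z
      · subst hxz; rw [hdiag x, hne x y hxy]; linarith
      · rw [hne x z hxz]; linarith [hge z y]
  · exact ⟨3, by rintro v ⟨xy, rfl⟩; exact hval xy.1 xy.2⟩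
  · intro I c r hr hpc
    by_cases h : ∃ i, c i = b ∧ r i < 1
    · obtain ⟨i0, hi0, hr0⟩ := h
      refine ⟨b, fun i => ?_⟩
      rcases hcov (c i) with hi | hi <;> rw [hi]
      · have := hpc i0 i
        rw [hi0, hi, hba] at this
        rw [hba, haa]; linarith
      · rw [hbb]; linarith [hr i]
    · push_neg at h
      refine ⟨a, fun i => ?_⟩
      rcases hcov (c i) with hi | hi <;> rw [hi]
      · rw [haa]; linarith [hr i]
      · have := h i hi
        rw [hab', hbb]; linarith
  · intro I c r hr hpc
    by_cases h : ∃ i, c i = b ∧ r i < 1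
    · obtain ⟨i0, hi0, hr0⟩ := h
      refine ⟨b, fun i => ?_⟩
      rcases hcov (c i) with hi | hi <;> rw [hi, hbb]
      · have := hpc i0 i
        rw [hi0, hi, hba] at this
        rw [hba]; linarith
      · linarith [hr i]
    · push_neg at h
      refine ⟨a, fun i => ?_⟩
      rcases hcov (c i) with hi | hi <;> rw [hi, haa]
      · linarith [hr i]
      · have := h i hi
        rw [hab']; linarith
  · intro x y
    rcases hcov x with hx | hx <;> rcases hcov y with hy | hy <;> subst hx <;> subst hy <;>
      simp [hfa, hfb, haa, hbb, hab', hba]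
  · rintro ⟨x, hx⟩
    rcases hcov x with h | h <;> subst h
    · exact hab (hfa ▸ hx).symm
    · exact hab (hfb ▸ hx)
end
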